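/- arXiv:2205.14235 — 2 statements merged into one kernel-verified Lean document; each statement's English description precedes it below -/
import Mathlib

section
/- Let X = ⋃_{i=1}^{m} K_i ⊆ ℤⁿ where each K_i = ∏_{j=1}^{n} [a_{ij}, b_{ij}] ∩ ℤⁿ is a digital cube, m ≥ 1, and X is c_1-connected. Let A_i = ∏_{j=1}^{n} {a_{ij}, b_{ij}} be the corner set of K_i and A = ⋃_{i=1}^{m} A_i. Then A is a freezing set for (X, c_1). -/
/-!
A c_1-continuous map does not increase the ℓ¹ distance between points of a digital cube,
since any two points of the cube are joined inside it by a c_1-path whose length is their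
ℓ¹ distance. If g fixes the corners of the cube, then for every point x of the cube and every
corner c we get ‖g x - c‖₁ ≤ ‖x - c‖₁. Choosing, coordinatewise, the corner c lying on the far
side of x from g x makes this inequality strict unless g x = x.
-/

/-- A κ-path of some length m in S from a to b (consecutive points equal or adjacent). -/
def DigPath {α : Type*} (κ : α → α → Prop) (S : Set α) (a b : α) : Prop :=
  ∃ (m : ℕ) (r : ℕ → α), r 0 = a ∧ r m = b ∧ (∀ k, k ≤ m → r k ∈ S) ∧
    ∀ k, k < m → r k = r (k + 1) ∨ κ (r k) (r (k + 1))

/-- S is κ-connected: any two points of S are joined by a κ-path in S. -/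
def DigConnected {α : Type*} (κ : α → α → Prop) (S : Set α) : Prop :=
  ∀ a ∈ S, ∀ b ∈ S, DigPath κ S a b

/-- (κ,λ)-continuity via the adjacency characterization. -/
def DigCont {α β : Type*} (κ : α → α → Prop) (lam : β → β → Prop)
    (X : Set α) (f : α → β) : Prop :=
  ∀ x ∈ X, ∀ y ∈ X, κ x y → f x = f y ∨ lam (f x) (f y)

/-- A ⊆ X is a freezing set for (X, κ). -/
def FreezingSet {α : Type*} (κ : α → α → Prop) (X A : Set α) : Prop :=
  A ⊆ X ∧ ∀ g : α → α, (∀ x ∈ X, g x ∈ X) → DigCont κ κ X g →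
    (∀ a ∈ A, g a = a) → ∀ x ∈ X, g x = x

/-- The c_u adjacency on ℤⁿ: distinct points differing by exactly 1 in at most u
coordinates and equal in all others. -/
def cAdj (n u : ℕ) (x y : Fin n → ℤ) : Prop :=
  x ≠ y ∧ (∀ i, x i = y i ∨ |x i - y i| = 1) ∧
    (Finset.univ.filter (fun i => x i ≠ y i)).card ≤ u

/-- The boundary of A ⊆ ℤⁿ: points of A that are c_1-adjacent to a point outside A. -/
def Bd (n : ℕ) (A : Set (Fin n → ℤ)) : Set (Fin n → ℤ) :=
  {x ∈ A | ∃ y, y ∉ A ∧ cAdj n 1 x y}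

variable {n : ℕ}

def l1Dist (u v : Fin n → ℤ) : ℕ := ∑ j, (u j - v j).natAbs

lemma l1Dist_self (u : Fin n → ℤ) : l1Dist u u = 0 := by
  simp [l1Dist]

lemma eq_of_l1Dist_eq_zero {u v : Fin n → ℤ} (h : l1Dist u v = 0) : u = v := by
  funext j
  have := Finset.sum_eq_zero_iff.mp h j (Finset.mem_univ j)
  omega

lemma l1Dist_comm (u v : Fin n → ℤ) : l1Dist u v = l1Dist v u :=
  Finset.sum_congr rfl fun j _ => by omega

lemma l1Dist_triangle (u v w : Fin n → ℤ) : l1Dist u w ≤ l1Dist u v + l1Dist v w := by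
  rw [l1Dist, l1Dist, l1Dist, ← Finset.sum_add_distrib]
  exact Finset.sum_le_sum fun j _ => by omega

lemma l1Dist_le_one_of_cAdj {x y : Fin n → ℤ} (h : cAdj n 1 x y) : l1Dist x y ≤ 1 := by
  obtain ⟨-, hdiff, hcard⟩ := h
  calc l1Dist x y ≤ ∑ j, if x j ≠ y j then 1 else 0 := by
        refine Finset.sum_le_sum fun j _ => ?_
        rcases hdiff j with h | h
        · simp [h]
        · have : (x j - y j).natAbs = 1 := by have := Int.natCast_natAbs (x j - y j); omega
          simp [this, show x j ≠ y j by omega]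
    _ = (Finset.univ.filter fun j => x j ≠ y j).card := (Finset.card_filter _ _).symm
    _ ≤ 1 := hcard

lemma l1Dist_update_add (x c : Fin n → ℤ) (j : Fin n) (t : ℤ) :
    l1Dist x (Function.update c j t) + (x j - c j).natAbs = l1Dist x c + (x j - t).natAbs := by
  have hrest : ∑ i ∈ Finset.univ.erase j, (x i - Function.update c j t i).natAbs =
      ∑ i ∈ Finset.univ.erase j, (x i - c i).natAbs :=
    Finset.sum_congr rfl fun i hi => by rw [Function.update_of_ne (Finset.ne_of_mem_erase hi)]
  rw [l1Dist, l1Dist, ← Finset.add_sum_erase _ _ (Finset.mem_univ j),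
    ← Finset.add_sum_erase _ _ (Finset.mem_univ j), hrest, Function.update_self]
  ring

lemma cAdj_update_add (c : Fin n → ℤ) (j : Fin n) {s : ℤ} (hs : |s| = 1) :
    cAdj n 1 c (Function.update c j (c j + s)) := by
  refine ⟨fun h => ?_, fun i => ?_, ?_⟩
  · have := congrFun h j
    rw [Function.update_self] at this
    simp [show s = 0 by omega] at hs
  · rcases eq_or_ne i j with rfl | hij
    · right
      rw [Function.update_self, sub_add_cancel_left, abs_neg, hs]
    · left
      rw [Function.update_of_ne hij]
  · refine (Finset.card_le_card (t := {j}) fun i hi => ?_).trans (Finset.card_singleton j).le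
    rw [Finset.mem_singleton]
    by_contra hij
    exact (Finset.mem_filter.mp hi).2 (Function.update_of_ne hij _ _).symm

def digitalCube (a b : Fin n → ℤ) : Set (Fin n → ℤ) := {x | ∀ j, a j ≤ x j ∧ x j ≤ b j}

def cubeCorners (a b : Fin n → ℤ) : Set (Fin n → ℤ) := {x | ∀ j, x j = a j ∨ x j = b j}

section Cube

variable {a b : Fin n → ℤ}

lemma cubeCorners_subset_digitalCube (hab : ∀ j, a j ≤ b j) :
    cubeCorners a b ⊆ digitalCube a b := by
  intro x hx j
  rcases hx j with h | h <;> rw [h]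
  exacts [⟨le_rfl, hab j⟩, ⟨hab j, le_rfl⟩]

lemma exists_cAdj_step_toward {x c : Fin n → ℤ} (hx : x ∈ digitalCube a b)
    (hc : c ∈ digitalCube a b) (hne : x ≠ c) :
    ∃ c' ∈ digitalCube a b, cAdj n 1 c c' ∧ l1Dist x c' + 1 = l1Dist x c := by
  obtain ⟨j, hj⟩ := Function.ne_iff.mp hne
  obtain ⟨s, hs, hsa, hsb, hsx⟩ : ∃ s : ℤ, |s| = 1 ∧ a j ≤ c j + s ∧ c j + s ≤ b j ∧
      (x j - (c j + s)).natAbs + 1 = (x j - c j).natAbs := by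
    have := hx j
    have := hc j
    rcases hj.lt_or_gt with h | h
    · exact ⟨-1, by norm_num, by omega, by omega, by omega⟩
    · exact ⟨1, by norm_num, by omega, by omega, by omega⟩
  refine ⟨Function.update c j (c j + s), fun i => ?_, cAdj_update_add c j hs, ?_⟩
  · rcases eq_or_ne i j with rfl | hij
    · rw [Function.update_self]
      exact ⟨hsa, hsb⟩
    · rw [Function.update_of_ne hij]
      exact hc i
  · have := l1Dist_update_add x c j (c j + s)
    omega

variable {S : Set (Fin n → ℤ)} {g : (Fin n → ℤ) → Fin n → ℤ}

lemma DigCont.l1Dist_le_of_digitalCube_subset (hg : DigCont (cAdj n 1) (cAdj n 1) S g)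
    (hS : digitalCube a b ⊆ S) {x c : Fin n → ℤ} (hx : x ∈ digitalCube a b)
    (hc : c ∈ digitalCube a b) : l1Dist (g x) (g c) ≤ l1Dist x c := by
  induction hd : l1Dist x c generalizing c with
  | zero => rw [eq_of_l1Dist_eq_zero hd, l1Dist_self]
  | succ d ih =>
    obtain ⟨c', hc', hadj, hdist⟩ :=
      exists_cAdj_step_toward hx hc fun h => by simp [h, l1Dist_self] at hd
    have hstep : l1Dist (g c') (g c) ≤ 1 := by
      rcases hg c (hS hc) c' (hS hc') hadj with h | h
      · rw [h, l1Dist_self]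
        exact zero_le_one
      · rw [l1Dist_comm]
        exact l1Dist_le_one_of_cAdj h
    calc l1Dist (g x) (g c) ≤ l1Dist (g x) (g c') + l1Dist (g c') (g c) := l1Dist_triangle _ _ _
      _ ≤ d + 1 := add_le_add (ih hc' (by omega)) hstep

lemma eq_of_forall_cubeCorners_l1Dist_le {x z : Fin n → ℤ} (hx : x ∈ digitalCube a b)
    (h : ∀ c ∈ cubeCorners a b, l1Dist z c ≤ l1Dist x c) : z = x := by
  by_contra hne
  obtain ⟨j₀, hj₀⟩ := Function.ne_iff.mp hne
  let c : Fin n → ℤ := fun j => if x j ≤ z j then a j else b j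
  have hc : c ∈ cubeCorners a b := fun j => by by_cases h : x j ≤ z j <;> simp [c, h]
  have hlt : l1Dist x c < l1Dist z c := by
    refine Finset.sum_lt_sum (fun j _ => ?_) ⟨j₀, Finset.mem_univ _, ?_⟩
    · have := hx j
      simp only [c]
      split_ifs <;> omega
    · have := hx j₀
      simp only [c]
      split_ifs <;> omega
  exact (h c hc).not_gt hlt

lemma DigCont.apply_eq_self_of_mem_digitalCube (hg : DigCont (cAdj n 1) (cAdj n 1) S g)
    (hS : digitalCube a b ⊆ S) (hfix : ∀ c ∈ cubeCorners a b, g c = c) {x : Fin n → ℤ}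
    (hx : x ∈ digitalCube a b) : g x = x := by
  have hab : ∀ j, a j ≤ b j := fun j => (hx j).1.trans (hx j).2
  refine eq_of_forall_cubeCorners_l1Dist_le hx fun c hc => ?_
  have := hg.l1Dist_le_of_digitalCube_subset hS hx (cubeCorners_subset_digitalCube hab hc)
  rwa [hfix c hc] at this

end Cube

theorem unionCubes_freezingSet_c1_general {n m : ℕ}
    (a b : Fin m → Fin n → ℤ) (hab : ∀ i j, a i j ≤ b i j)
    (K : Fin m → Set (Fin n → ℤ))
    (hK : ∀ i, K i = {x | ∀ j, a i j ≤ x j ∧ x j ≤ b i j})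
    (X : Set (Fin n → ℤ)) (hX : X = ⋃ i, K i)
    (A : Set (Fin n → ℤ)) (hA : A = ⋃ i, {x | ∀ j, x j = a i j ∨ x j = b i j}) :
    FreezingSet (cAdj n 1) X A := by
  obtain rfl : K = fun i => digitalCube (a i) (b i) := funext hK
  subst hX hA
  refine ⟨Set.iUnion_mono fun i => cubeCorners_subset_digitalCube (hab i), ?_⟩
  rintro g - hg hfix x hx
  obtain ⟨i, hxi⟩ := Set.mem_iUnion.mp hx
  exact hg.apply_eq_self_of_mem_digitalCube
    (Set.subset_iUnion (fun i => digitalCube (a i) (b i)) i)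
    (fun c hc => hfix c (Set.mem_iUnion_of_mem i hc)) hxi

/-- The union of the corner sets of cubes decomposing a c_1-connected image X is a
freezing set for (X, c_1). -/
theorem unionCubes_freezingSet_c1 {n m : ℕ} (hm : 1 ≤ m)
    (a b : Fin m → Fin n → ℤ) (hab : ∀ i j, a i j ≤ b i j)
    (K : Fin m → Set (Fin n → ℤ))
    (hK : ∀ i, K i = {x | ∀ j, a i j ≤ x j ∧ x j ≤ b i j})
    (X : Set (Fin n → ℤ)) (hX : X = ⋃ i, K i)
    (hconn : DigConnected (cAdj n 1) X)
    (A : Set (Fin n → ℤ)) (hA : A = ⋃ i, {x | ∀ j, x j = a i j ∨ x j = b i j}) :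
    FreezingSet (cAdj n 1) X A :=
  unionCubes_freezingSet_c1_general a b hab K hK X hX A hA
end

section
/- Let X be a finite digital image in ℤⁿ and 1 ≤ u ≤ n. Then Bd(X) is a freezing set for (X, c_u). -/
/-!
Let `g : X → X` be `c_u`-continuous and fix `Bd X` pointwise, and let `x ∈ X` and `i` be a
coordinate. Walking from `x` along the `i`-th axis one must leave the finite set `X`; the last
point `p = x ± s eᵢ` still in `X` is a boundary point, so `g p = p`. Each step is a
`c_1`-adjacency, hence a `c_u`-adjacency, and `g` moves each coordinate by at most one per step,
so `|g x i - (x i ± s)| ≤ s`. The positive direction gives `x i ≤ g x i`, the negative one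
`g x i ≤ x i`.
-/

lemma cAdj.abs_sub_le_one {n u : ℕ} {x y : Fin n → ℤ} (h : cAdj n u x y) (i : Fin n) :
    |x i - y i| ≤ 1 := by
  rcases h.2.1 i with h' | h'
  · simp [h']
  · exact h'.le

lemma cAdj.mono {n u v : ℕ} (huv : u ≤ v) {x y : Fin n → ℤ} (h : cAdj n u x y) :
    cAdj n v x y :=
  ⟨h.1, h.2.1, h.2.2.trans huv⟩

lemma cAdj_one_update {n : ℕ} (x : Fin n → ℤ) (i : Fin n) {a b : ℤ} (hab : |a - b| = 1) :
    cAdj n 1 (Function.update x i a) (Function.update x i b) := by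
  have hne : a ≠ b := by rintro rfl; simp at hab
  have hsupp : (Finset.univ.filter fun j =>
      Function.update x i a j ≠ Function.update x i b j) = {i} := by
    ext j
    by_cases hj : j = i
    · subst hj; simpa using hne
    · simp [hj]
  refine ⟨fun h => hne (by simpa using congrFun h i), fun j => ?_, by rw [hsupp]; simp⟩
  by_cases hj : j = i
  · subst hj; simp [hab]
  · simp [Function.update_of_ne hj]

lemma DigCont.abs_apply_sub_le_one {n u : ℕ} {X : Set (Fin n → ℤ)}
    {g : (Fin n → ℤ) → Fin n → ℤ} (hg : DigCont (cAdj n u) (cAdj n u) X g)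
    {x y : Fin n → ℤ} (hx : x ∈ X) (hy : y ∈ X) (hxy : cAdj n u x y) (i : Fin n) :
    |g x i - g y i| ≤ 1 := by
  rcases hg x hx y hy hxy with h | h
  · simp [h]
  · exact h.abs_sub_le_one i

lemma Int.abs_sub_le_of_abs_sub_succ_le_one {f : ℕ → ℤ} {m : ℕ}
    (h : ∀ k < m, |f k - f (k + 1)| ≤ 1) : |f 0 - f m| ≤ m := by
  induction m with
  | zero => simp
  | succ m ih =>
    calc |f 0 - f (m + 1)| ≤ |f 0 - f m| + |f m - f (m + 1)| := abs_sub_le _ _ _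
      _ ≤ m + 1 := add_le_add (ih fun k hk => h k (by omega)) (h m m.lt_succ_self)
      _ = ((m + 1 : ℕ) : ℤ) := by push_cast; rfl

lemma Set.Finite.exists_last_mem_of_injective {α : Type*} {X : Set α} (hX : X.Finite)
    {p : ℕ → α} (hp : Function.Injective p) (h0 : p 0 ∈ X) :
    ∃ s, (∀ k ≤ s, p k ∈ X) ∧ p (s + 1) ∉ X := by
  classical
  have hexit : ∃ k, p k ∉ X := by
    by_contra! h
    exact Set.infinite_range_of_injective hp (hX.subset (Set.range_subset_iff.mpr h))
  obtain ⟨s, hs⟩ : ∃ s, Nat.find hexit = s + 1 :=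
    Nat.exists_eq_succ_of_ne_zero fun h => (h ▸ Nat.find_spec hexit) h0
  refine ⟨s, fun k hk => ?_, hs ▸ Nat.find_spec hexit⟩
  by_contra hkX
  exact absurd (Nat.find_min' hexit hkX) (by omega)

def axisRay {n : ℕ} (x : Fin n → ℤ) (i : Fin n) (ε : ℤ) (k : ℕ) : Fin n → ℤ :=
  Function.update x i (x i + ε * k)

section axisRay

variable {n : ℕ} (x : Fin n → ℤ) (i : Fin n) {ε : ℤ}

lemma axisRay_injective (hε : |ε| = 1) : Function.Injective (axisRay x i ε) := by
  have hε0 : ε ≠ 0 := by rintro rfl; simp at hε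
  intro k l hkl
  have := Function.update_injective x i hkl
  exact_mod_cast mul_left_cancel₀ hε0 (add_left_cancel this)

lemma cAdj_axisRay_succ (hε : |ε| = 1) (k : ℕ) :
    cAdj n 1 (axisRay x i ε k) (axisRay x i ε (k + 1)) :=
  cAdj_one_update x i (by push_cast; rw [show x i + ε * k - (x i + ε * (k + 1)) = -ε by ring,
    abs_neg, hε])

lemma exists_abs_apply_sub_axisRay_le {u : ℕ} (hu : 1 ≤ u) {X : Set (Fin n → ℤ)}
    (hX : X.Finite) {g : (Fin n → ℤ) → Fin n → ℤ} (hg : DigCont (cAdj n u) (cAdj n u) X g)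
    (hfix : ∀ a ∈ Bd n X, g a = a) (hx : x ∈ X) (hε : |ε| = 1) :
    ∃ s : ℕ, |g x i - (x i + ε * s)| ≤ s := by
  have hp0 : axisRay x i ε 0 = x := by simp [axisRay]
  obtain ⟨s, hmem, hexit⟩ :=
    hX.exists_last_mem_of_injective (axisRay_injective x i hε) (by rwa [hp0])
  have hbd : axisRay x i ε s ∈ Bd n X :=
    ⟨hmem s le_rfl, _, hexit, cAdj_axisRay_succ x i hε s⟩
  have hdrift : |g (axisRay x i ε 0) i - g (axisRay x i ε s) i| ≤ s :=
    Int.abs_sub_le_of_abs_sub_succ_le_one fun k hk =>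
      hg.abs_apply_sub_le_one (hmem _ hk.le) (hmem _ hk) ((cAdj_axisRay_succ x i hε k).mono hu) i
  refine ⟨s, ?_⟩
  rwa [hfix _ hbd, hp0, show axisRay x i ε s i = x i + ε * s by simp [axisRay]] at hdrift

end axisRay

theorem bd_freezingSet_general {n u : ℕ} (hu1 : 1 ≤ u)
    (X : Set (Fin n → ℤ)) (hX : X.Finite) :
    FreezingSet (cAdj n u) X (Bd n X) := by
  refine ⟨fun a ha => ha.1, fun g _ hg hfix x hx => funext fun i => ?_⟩
  obtain ⟨s, hs⟩ := exists_abs_apply_sub_axisRay_le x i hu1 hX hg hfix hx (ε := 1) (by simp)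
  obtain ⟨t, ht⟩ := exists_abs_apply_sub_axisRay_le x i hu1 hX hg hfix hx (ε := -1) (by simp)
  rw [abs_le] at hs ht
  linarith [hs.1, ht.2]

/-- The boundary of a finite digital image X is a freezing set for (X, c_u). -/
theorem bd_freezingSet {n u : ℕ} (hu1 : 1 ≤ u) (hun : u ≤ n)
    (X : Set (Fin n → ℤ)) (hX : X.Finite) :
    FreezingSet (cAdj n u) X (Bd n X) :=
  bd_freezingSet_general hu1 X hX
end
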